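/- arXiv:1705.04347 — 3 statements merged into one kernel-verified Lean document; each statement's English description precedes it below -/
import Mathlib

section
/- Assume 𝓗 : ℝ² → ℝ is three times continuously differentiable, 𝓗(0,0) = 0, the gradient of 𝓗 vanishes at (0,0), and in the coordinates (η, ξ) the second-order Taylor polynomial of 𝓗 at the origin is ½ω₀(η² − ξ²) for a constant ω₀ > 0. Then there exist constants d₃ > 0, d₄ > 0 and ρ > 0 such that for every ξ with |ξ| ≤ d₃ and every h with 0 ≤ h ≤ d₄ the equation 𝓗(η, ξ) = h has a unique solution η with 0 ≤ η ≤ ρ; denote it η̃(h, ξ). Moreover, at every (h, ξ) in this range with h + ξ² > 0 the function η̃ is differentiable and ∂η̃/∂h (h, ξ) = 1 / (∂𝓗/∂η)(η̃(h,ξ), ξ) and ∂η̃/∂ξ (h, ξ) = − (∂𝓗/∂ξ)(η̃(h,ξ), ξ) / (∂𝓗/∂η)(η̃(h,ξ), ξ). -/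
set_option maxHeartbeats 1000000

open Set Filter Topology

theorem saddle_key (𝓗 : ℝ × ℝ → ℝ) (ω₀ : ℝ) (hω₀ : 0 < ω₀)
    (hsmooth : ContDiff ℝ 3 𝓗)
    (hval : 𝓗 (0, 0) = 0)
    (hgrad : fderiv ℝ 𝓗 ((0 : ℝ), (0 : ℝ)) = 0)
    (hηη : fderiv ℝ (fun p : ℝ × ℝ => fderiv ℝ 𝓗 p (1, 0)) ((0 : ℝ), (0 : ℝ)) (1, 0) = ω₀)
    (hηξ : fderiv ℝ (fun p : ℝ × ℝ => fderiv ℝ 𝓗 p (1, 0)) ((0 : ℝ), (0 : ℝ)) (0, 1) = 0)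
    (hξξ : fderiv ℝ (fun p : ℝ × ℝ => fderiv ℝ 𝓗 p (0, 1)) ((0 : ℝ), (0 : ℝ)) (0, 1) = -ω₀) :
    ∃ r : ℝ, 0 < r ∧ ∀ p : ℝ × ℝ, ‖p‖ ≤ r →
      |𝓗 p - ω₀ / 2 * (p.1 ^ 2 - p.2 ^ 2)| ≤ ω₀ / 8 * ‖p‖ ^ 2 ∧
      |fderiv ℝ 𝓗 p (1, 0) - ω₀ * p.1| ≤ ω₀ / 8 * ‖p‖ := by
  have hd : Differentiable ℝ 𝓗 := hsmooth.differentiable (by norm_num)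
  have h2 : ContDiff ℝ 2 (fderiv ℝ 𝓗) := hsmooth.fderiv_right (m := 2) (by norm_num)
  have hF1d : Differentiable ℝ (fderiv ℝ 𝓗) := h2.differentiable (by norm_num)
  set F2 : ℝ × ℝ → (ℝ × ℝ →L[ℝ] ℝ × ℝ →L[ℝ] ℝ) := fderiv ℝ (fderiv ℝ 𝓗) with hF2def
  have hF2c : Continuous F2 := h2.continuous_fderiv (by norm_num)
  set B := F2 0 with hBdef
  have happ : ∀ v w : ℝ × ℝ, fderiv ℝ (fun p : ℝ × ℝ => fderiv ℝ 𝓗 p v) 0 w = B w v := by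
    intro v w
    rw [fderiv_clm_apply (hF1d 0) (differentiableAt_const v)]
    simp
    rfl
  have hsymm : ∀ v w : ℝ × ℝ, B v w = B w v := fun v w =>
    second_derivative_symmetric (fun x => (hd x).hasFDerivAt) ((hF1d 0).hasFDerivAt) v w
  have hB11 : B (1, 0) (1, 0) = ω₀ := by rw [← happ (1, 0) (1, 0)]; exact hηη
  have hB21 : B (0, 1) (1, 0) = 0 := by rw [← happ (1, 0) (0, 1)]; exact hηξ
  have hB22 : B (0, 1) (0, 1) = -ω₀ := by rw [← happ (0, 1) (0, 1)]; exact hξξ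
  have hB12 : B (1, 0) (0, 1) = 0 := (hsymm _ _).trans hB21
  have hBall : ∀ v w : ℝ × ℝ, B v w = ω₀ * (v.1 * w.1 - v.2 * w.2) := by
    intro v w
    have hv : v = v.1 • ((1 : ℝ), (0 : ℝ)) + v.2 • ((0 : ℝ), (1 : ℝ)) := by
      apply Prod.ext <;> simp
    have hw : w = w.1 • ((1 : ℝ), (0 : ℝ)) + w.2 • ((0 : ℝ), (1 : ℝ)) := by
      apply Prod.ext <;> simp
    conv_lhs => rw [hv, hw]
    simp only [map_add, map_smul, ContinuousLinearMap.add_apply, ContinuousLinearMap.coe_smul',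
      Pi.smul_apply, hB11, hB12, hB21, hB22, smul_eq_mul]
    ring
  obtain ⟨r, hr, hF2r⟩ : ∃ r : ℝ, 0 < r ∧ ∀ q : ℝ × ℝ, ‖q‖ ≤ r → ‖F2 q - B‖ ≤ ω₀ / 8 := by
    have hopen : IsOpen {q : ℝ × ℝ | dist (F2 q) B < ω₀ / 8} :=
      isOpen_lt (hF2c.dist continuous_const) continuous_const
    have h0mem : (0 : ℝ × ℝ) ∈ {q : ℝ × ℝ | dist (F2 q) B < ω₀ / 8} := by
      simp only [Set.mem_setOf_eq, ← hBdef, dist_self]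
      positivity
    obtain ⟨δ, hδ, hball⟩ := Metric.isOpen_iff.1 hopen 0 h0mem
    refine ⟨δ / 2, by positivity, fun q hq => ?_⟩
    have hball' := hball (show q ∈ Metric.ball (0 : ℝ × ℝ) δ by
      rw [Metric.mem_ball, dist_zero_right]; linarith)
    exact le_of_lt ((dist_eq_norm (F2 q) B) ▸ hball')
  have hgrad0 : fderiv ℝ 𝓗 (0 : ℝ × ℝ) = 0 := hgrad
  have hE1 : ∀ p : ℝ × ℝ, ‖p‖ ≤ r → ‖fderiv ℝ 𝓗 p - B p‖ ≤ ω₀ / 8 * ‖p‖ := by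
    intro p hp
    have key := (convex_closedBall (0 : ℝ × ℝ) r).norm_image_sub_le_of_norm_hasFDerivWithin_le
      (f := fun q => fderiv ℝ 𝓗 q - B q) (f' := fun q => F2 q - B) (C := ω₀ / 8)
      (fun q hq => (((hF1d q).hasFDerivAt.sub (B.hasFDerivAt (x := q)))).hasFDerivWithinAt)
      (fun q hq => hF2r q (by simpa [Metric.mem_closedBall, dist_zero_right] using hq))
      (Metric.mem_closedBall_self hr.le)
      (by simpa [Metric.mem_closedBall, dist_zero_right] using hp)
    simpa [hgrad0, map_zero] using key
  refine ⟨r, hr, fun p hp => ?_⟩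
  constructor
  · -- value estimate
    have hQ : ∀ q : ℝ × ℝ, HasFDerivAt (fun q : ℝ × ℝ => ω₀ / 2 * (q.1 ^ 2 - q.2 ^ 2)) (B q) q := by
      intro q
      have h1 := (B.hasFDerivAt (x := q)).clm_apply (hasFDerivAt_id q)
      have h2' := h1.const_mul (1 / 2 : ℝ)
      have hfun : (fun y : ℝ × ℝ => ω₀ / 2 * (y.1 ^ 2 - y.2 ^ 2))
          = fun y : ℝ × ℝ => (1 / 2 : ℝ) * (B y y) := by
        funext y; rw [hBall]; ring
      rw [hfun]
      have hD : ((1 / 2 : ℝ) • ((B q).comp (ContinuousLinearMap.id ℝ (ℝ × ℝ))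
          + ContinuousLinearMap.flip B q)) = B q := by
        refine ContinuousLinearMap.ext fun w => ?_
        simp only [ContinuousLinearMap.coe_smul', Pi.smul_apply, ContinuousLinearMap.add_apply,
          ContinuousLinearMap.coe_comp', Function.comp_apply, ContinuousLinearMap.coe_id', id_eq,
          ContinuousLinearMap.flip_apply, smul_eq_mul, hBall]
        ring
      exact hD ▸ h2'
    have key := (convex_closedBall (0 : ℝ × ℝ) ‖p‖).norm_image_sub_le_of_norm_hasFDerivWithin_le
      (f := fun q => 𝓗 q - ω₀ / 2 * (q.1 ^ 2 - q.2 ^ 2)) (f' := fun q => fderiv ℝ 𝓗 q - B q)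
      (C := ω₀ / 8 * ‖p‖)
      (fun q hq => ((hd q).hasFDerivAt.sub (hQ q)).hasFDerivWithinAt)
      (fun q hq => by
        rw [Metric.mem_closedBall, dist_zero_right] at hq
        have h1 := hE1 q (hq.trans hp)
        have h2'' : ω₀ / 8 * ‖q‖ ≤ ω₀ / 8 * ‖p‖ :=
          mul_le_mul_of_nonneg_left hq (by positivity)
        exact h1.trans h2'')
      (Metric.mem_closedBall_self (norm_nonneg p))
      (show p ∈ Metric.closedBall (0 : ℝ × ℝ) ‖p‖ by
        simp [Metric.mem_closedBall, dist_zero_right])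
    have hval0 : 𝓗 (0 : ℝ × ℝ) = 0 := hval
    rw [Real.norm_eq_abs] at key
    calc |𝓗 p - ω₀ / 2 * (p.1 ^ 2 - p.2 ^ 2)| ≤ ω₀ / 8 * ‖p‖ * ‖p‖ := by
          simpa [hval0, Real.norm_eq_abs] using key
      _ = ω₀ / 8 * ‖p‖ ^ 2 := by ring
  · -- derivative estimate
    have hent : fderiv ℝ 𝓗 p (1, 0) - ω₀ * p.1 = (fderiv ℝ 𝓗 p - B p) ((1 : ℝ), (0 : ℝ)) := by
      simp only [ContinuousLinearMap.sub_apply, hBall]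
      ring
    rw [hent, ← Real.norm_eq_abs]
    calc ‖(fderiv ℝ 𝓗 p - B p) ((1 : ℝ), (0 : ℝ))‖
        ≤ ‖fderiv ℝ 𝓗 p - B p‖ * ‖((1 : ℝ), (0 : ℝ))‖ := ContinuousLinearMap.le_opNorm _ _
      _ = ‖fderiv ℝ 𝓗 p - B p‖ := by
          have h1 : ‖((1 : ℝ), (0 : ℝ))‖ = 1 := by simp [Prod.norm_def]
          rw [h1, mul_one]
      _ ≤ ω₀ / 8 * ‖p‖ := hE1 p hp

/-- Corollary 3.5(a): near a non-degenerate saddle at the origin with quadratic part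
`½ω₀(η² − ξ²)`, for `|ξ| ≤ d₃` and `0 ≤ h ≤ d₄` the equation `𝓗(η, ξ) = h` has a unique
solution `η = η̃(h, ξ) ∈ [0, ρ]`, and for `h + ξ² > 0` the function `η̃` is differentiable
with `∂η̃/∂h = 1/(∂𝓗/∂η)` and `∂η̃/∂ξ = −(∂𝓗/∂ξ)/(∂𝓗/∂η)`. -/
theorem implicit_branch_near_saddle (𝓗 : ℝ × ℝ → ℝ) (ω₀ : ℝ) (hω₀ : 0 < ω₀)
    (hsmooth : ContDiff ℝ 3 𝓗)
    (hval : 𝓗 (0, 0) = 0)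
    (hgrad : fderiv ℝ 𝓗 ((0 : ℝ), (0 : ℝ)) = 0)
    (hηη : fderiv ℝ (fun p : ℝ × ℝ => fderiv ℝ 𝓗 p (1, 0)) ((0 : ℝ), (0 : ℝ)) (1, 0) = ω₀)
    (hηξ : fderiv ℝ (fun p : ℝ × ℝ => fderiv ℝ 𝓗 p (1, 0)) ((0 : ℝ), (0 : ℝ)) (0, 1) = 0)
    (hξξ : fderiv ℝ (fun p : ℝ × ℝ => fderiv ℝ 𝓗 p (0, 1)) ((0 : ℝ), (0 : ℝ)) (0, 1) = -ω₀) :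
    ∃ d₃ d₄ ρ : ℝ, 0 < d₃ ∧ 0 < d₄ ∧ 0 < ρ ∧
      ∃ ηt : ℝ → ℝ → ℝ,
        ∀ ξ : ℝ, |ξ| ≤ d₃ → ∀ h : ℝ, 0 ≤ h → h ≤ d₄ →
          0 ≤ ηt h ξ ∧ ηt h ξ ≤ ρ ∧ 𝓗 (ηt h ξ, ξ) = h ∧
          (∀ η' : ℝ, 0 ≤ η' → η' ≤ ρ → 𝓗 (η', ξ) = h → η' = ηt h ξ) ∧
          (0 < h + ξ ^ 2 →
            DifferentiableAt ℝ (fun p : ℝ × ℝ => ηt p.1 p.2) (h, ξ) ∧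
            fderiv ℝ (fun p : ℝ × ℝ => ηt p.1 p.2) (h, ξ) (1, 0) =
              1 / fderiv ℝ 𝓗 (ηt h ξ, ξ) (1, 0) ∧
            fderiv ℝ (fun p : ℝ × ℝ => ηt p.1 p.2) (h, ξ) (0, 1) =
              -(fderiv ℝ 𝓗 (ηt h ξ, ξ) (0, 1)) / fderiv ℝ 𝓗 (ηt h ξ, ξ) (1, 0)) := by
  classical
  obtain ⟨r, hr, hest⟩ := saddle_key 𝓗 ω₀ hω₀ hsmooth hval hgrad hηη hηξ hξξ
  have hd : Differentiable ℝ 𝓗 := hsmooth.differentiable (by norm_num)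
  have hnorm_le : ∀ η ξ : ℝ, 0 ≤ η → η ≤ r → |ξ| ≤ r → ‖((η, ξ) : ℝ × ℝ)‖ ≤ r := by
    intro η ξ h0 h1 h2
    rw [Prod.norm_def, max_le_iff]
    exact ⟨by rwa [Real.norm_eq_abs, abs_of_nonneg h0], by rwa [Real.norm_eq_abs]⟩
  -- two-sided bound on 𝓗
  have hmain : ∀ η ξ : ℝ, 0 ≤ η → η ≤ r → |ξ| ≤ r →
      3/8*ω₀*η^2 - 5/8*ω₀*ξ^2 ≤ 𝓗 (η, ξ) ∧ 𝓗 (η, ξ) ≤ 5/8*ω₀*η^2 - 3/8*ω₀*ξ^2 := by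
    intro η ξ h0 h1 h2
    obtain ⟨hv, -⟩ := hest (η, ξ) (hnorm_le η ξ h0 h1 h2)
    have hn2 : ‖((η, ξ) : ℝ × ℝ)‖^2 ≤ η^2 + ξ^2 := by
      rw [Prod.norm_def]
      rcases max_cases ‖η‖ ‖ξ‖ with ⟨hm, -⟩ | ⟨hm, -⟩ <;> rw [hm] <;>
        simp only [Real.norm_eq_abs, sq_abs] <;> nlinarith [sq_nonneg η, sq_nonneg ξ]
    have hc : ω₀/8*‖((η, ξ) : ℝ × ℝ)‖^2 ≤ ω₀/8*(η^2+ξ^2) :=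
      mul_le_mul_of_nonneg_left hn2 (by positivity)
    have habs := abs_le.1 hv
    constructor <;> linarith [habs.1, habs.2]
  -- derivative bound
  have hder : ∀ η ξ : ℝ, 0 ≤ η → η ≤ r → |ξ| ≤ r →
      |fderiv ℝ 𝓗 (η, ξ) (1, 0) - ω₀*η| ≤ ω₀/8*(η + |ξ|) := by
    intro η ξ h0 h1 h2
    obtain ⟨-, hv⟩ := hest (η, ξ) (hnorm_le η ξ h0 h1 h2)
    have hn : ‖((η, ξ) : ℝ × ℝ)‖ ≤ η + |ξ| := by
      rw [Prod.norm_def, max_le_iff]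
      constructor
      · rw [Real.norm_eq_abs, abs_of_nonneg h0]; linarith [abs_nonneg ξ]
      · rw [Real.norm_eq_abs]; linarith
    calc |fderiv ℝ 𝓗 (η, ξ) (1, 0) - ω₀*η| ≤ ω₀/8 * ‖((η, ξ) : ℝ × ℝ)‖ := hv
      _ ≤ ω₀/8*(η + |ξ|) := mul_le_mul_of_nonneg_left hn (by positivity)
  -- slice derivative
  have hslice : ∀ ξ t : ℝ, HasDerivAt (fun t : ℝ => 𝓗 (t, ξ)) (fderiv ℝ 𝓗 (t, ξ) (1, 0)) t := by
    intro ξ t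
    have h1 : HasDerivAt (fun t : ℝ => ((t, ξ) : ℝ × ℝ)) ((1 : ℝ), (0 : ℝ)) t :=
      HasDerivAt.prodMk (hasDerivAt_id t) (hasDerivAt_const t ξ)
    exact (hd (t, ξ)).hasFDerivAt.comp_hasDerivAt t h1
  -- existence
  have hex : ∀ ξ h : ℝ, |ξ| ≤ r/10 → -(ω₀/8)*ξ^2 ≤ h → h ≤ ω₀*r^2/8 →
      ∃ η : ℝ, 0 ≤ η ∧ η ≤ r ∧ 𝓗 (η, ξ) = h := by
    intro ξ h hξ hh1 hh2
    have hξr : |ξ| ≤ r := hξ.trans (by linarith)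
    have hcont : ContinuousOn (fun t : ℝ => 𝓗 (t, ξ)) (Icc 0 r) :=
      (hd.continuous.comp (continuous_id.prodMk continuous_const)).continuousOn
    have h0 : 𝓗 (0, ξ) ≤ h := by
      have := (hmain 0 ξ le_rfl hr.le hξr).2
      linarith [mul_nonneg hω₀.le (sq_nonneg ξ)]
    have hsq : ξ^2 ≤ (r/10)^2 := sq_le_sq' (abs_le.1 hξ).1 (abs_le.1 hξ).2
    have hrr : h ≤ 𝓗 (r, ξ) := by
      have := (hmain r ξ hr.le le_rfl hξr).1
      linarith [mul_le_mul_of_nonneg_left hsq hω₀.le]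
    obtain ⟨η, hη, hηval⟩ := intermediate_value_Icc hr.le hcont ⟨h0, hrr⟩
    exact ⟨η, hη.1, hη.2, hηval⟩
  -- solution bounds
  have hSb : ∀ ξ h η : ℝ, |ξ| ≤ r/10 → 0 ≤ η → η ≤ r → 𝓗 (η, ξ) = h →
      h + 3/8*ω₀*ξ^2 ≤ 5/8*ω₀*η^2 ∧ 3/8*ω₀*η^2 ≤ h + 5/8*ω₀*ξ^2 := by
    intro ξ h η hξ h0 h1 hsol
    have hξr : |ξ| ≤ r := hξ.trans (by linarith)
    obtain ⟨hlo, hup⟩ := hmain η ξ h0 h1 hξr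
    rw [hsol] at hlo hup
    constructor <;> linarith
  -- uniqueness
  have huniq : ∀ ξ h η₁ η₂ : ℝ, |ξ| ≤ r/10 → -(ω₀/8)*ξ^2 ≤ h →
      0 ≤ η₁ → η₁ ≤ r → 𝓗 (η₁, ξ) = h → 0 ≤ η₂ → η₂ ≤ r → 𝓗 (η₂, ξ) = h → η₁ = η₂ := by
    have key : ∀ ξ h η₁ η₂ : ℝ, |ξ| ≤ r/10 → -(ω₀/8)*ξ^2 ≤ h →
        0 ≤ η₁ → η₁ ≤ r → 𝓗 (η₁, ξ) = h → 0 ≤ η₂ → η₂ ≤ r → 𝓗 (η₂, ξ) = h →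
        ¬ (η₁ < η₂) := by
      intro ξ h η₁ η₂ hξ hh h10 h1r hs1 h20 h2r hs2 hlt
      obtain ⟨c, hc, hc0⟩ := exists_hasDerivAt_eq_zero (f := fun t : ℝ => 𝓗 (t, ξ))
        (f' := fun t : ℝ => fderiv ℝ 𝓗 (t, ξ) (1, 0)) hlt
        ((hd.continuous.comp (continuous_id.prodMk continuous_const)).continuousOn)
        (show 𝓗 (η₁, ξ) = 𝓗 (η₂, ξ) by rw [hs1, hs2]) (fun x _ => hslice ξ x)
      have hcr : c ≤ r := le_trans hc.2.le h2r
      have hcnn : 0 ≤ c := le_trans h10 hc.1.le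
      have hcpos : 0 < c := lt_of_le_of_lt h10 hc.1
      have hξr : |ξ| ≤ r := hξ.trans (by linarith)
      have hdc := hder c ξ hcnn hcr hξr
      rw [hc0] at hdc
      have habs := abs_le.1 hdc
      have h7 : 7*c ≤ |ξ| := by nlinarith [habs.1, hω₀]
      have h49 : 49*c^2 ≤ ξ^2 := by
        nlinarith [mul_le_mul h7 h7 (by linarith) (abs_nonneg ξ), abs_mul_abs_self ξ]
      have hb1 := (hSb ξ h η₁ hξ h10 h1r hs1).1
      have hq1 : ξ^2 ≤ 5/2*η₁^2 := by nlinarith [hb1, hh, hω₀]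
      have hc2 : η₁^2 < c^2 := by nlinarith [hc.1, h10, hcpos]
      linarith [pow_pos hcpos 2]
    intro ξ h η₁ η₂ hξ hh h10 h1r hs1 h20 h2r hs2
    rcases lt_trichotomy η₁ η₂ with hlt | heq | hgt
    · exact absurd hlt (key ξ h η₁ η₂ hξ hh h10 h1r hs1 h20 h2r hs2)
    · exact heq
    · exact absurd hgt (key ξ h η₂ η₁ hξ hh h20 h2r hs2 h10 h1r hs1)
  refine ⟨r/20, ω₀*r^2/16, r, by positivity, by positivity, hr, ?_⟩
  obtain ⟨ηt, hηtspec⟩ : ∃ ηt : ℝ → ℝ → ℝ, ∀ h ξ : ℝ,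
      (|ξ| ≤ r/10 ∧ -(ω₀/8)*ξ^2 ≤ h ∧ h ≤ ω₀*r^2/8) →
      0 ≤ ηt h ξ ∧ ηt h ξ ≤ r ∧ 𝓗 (ηt h ξ, ξ) = h := by
    refine ⟨fun h ξ =>
      if hc : |ξ| ≤ r/10 ∧ -(ω₀/8)*ξ^2 ≤ h ∧ h ≤ ω₀*r^2/8 then
        (hex ξ h hc.1 hc.2.1 hc.2.2).choose
      else 0, fun h ξ hc => ?_⟩
    simp only [dif_pos hc]
    exact (hex ξ h hc.1 hc.2.1 hc.2.2).choose_spec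
  refine ⟨ηt, fun ξ hξ h hh0 hh4 => ?_⟩
  have hMc : |ξ| ≤ r/10 ∧ -(ω₀/8)*ξ^2 ≤ h ∧ h ≤ ω₀*r^2/8 :=
    ⟨hξ.trans (by linarith), le_trans (by linarith [mul_nonneg hω₀.le (sq_nonneg ξ)]) hh0,
      hh4.trans (by linarith [mul_pos hω₀ (mul_pos hr hr)])⟩
  obtain ⟨he0, her, hev⟩ := hηtspec h ξ hMc
  refine ⟨he0, her, hev,
    fun η' h1 h2 h3 => huniq ξ h η' (ηt h ξ) hMc.1 hMc.2.1 h1 h2 h3 he0 her hev,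
    fun hpos => ?_⟩
  -- differentiability part
  set e := ηt h ξ with hedef
  obtain ⟨hb1, hb2⟩ := hSb ξ h e hMc.1 he0 her hev
  have hepos : 0 < e := by
    rcases he0.lt_or_eq with h' | h'
    · exact h'
    · exfalso
      rw [← h'] at hb1
      have h1 : ω₀*ξ^2 ≤ 0 := by linarith [hb1, hh0]
      have hh' : h ≤ 0 := by linarith [mul_nonneg hω₀.le (sq_nonneg ξ)]
      have hξ2 : 0 < ξ^2 := by linarith [hpos]
      linarith [mul_pos hω₀ hξ2]
  have hsqξ : ξ^2 ≤ (r/10)^2 := sq_le_sq' (abs_le.1 hMc.1).1 (abs_le.1 hMc.1).2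
  have helt : e < r := by
    have h' : ω₀*(e^2) ≤ ω₀*(11/60*r^2) := by
      linarith [hb2, hh4, mul_le_mul_of_nonneg_left hsqξ hω₀.le]
    have he2 : e^2 ≤ 11/60*r^2 := (mul_le_mul_iff_right₀ hω₀).1 h'
    nlinarith [he0, hr]
  have hξ53 : ξ^2 ≤ 5/3*e^2 := by
    have h' : ω₀*(ξ^2) ≤ ω₀*(5/3*e^2) := by linarith [hb1, hh0]
    exact (mul_le_mul_iff_right₀ hω₀).1 h'
  have habs2e : |ξ| ≤ 2*e := by nlinarith [sq_abs ξ, abs_nonneg ξ, hξ53, hepos]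
  have hdeA := hder e ξ he0 her (hMc.1.trans (by linarith))
  set A := fderiv ℝ 𝓗 (e, ξ) (1, 0) with hAdef
  set Bc := fderiv ℝ 𝓗 (e, ξ) (0, 1) with hBcdef
  have hA : 0 < A := by
    have h1 := (abs_le.1 hdeA).1
    linarith [mul_le_mul_of_nonneg_left habs2e hω₀.le, mul_pos hω₀ hepos]
  have hAne : A ≠ 0 := ne_of_gt hA
  -- linear expansion of the derivative
  have hlin : ∀ w : ℝ × ℝ, fderiv ℝ 𝓗 (e, ξ) w = A * w.1 + Bc * w.2 := by
    intro w
    have hw : w = w.1 • ((1 : ℝ), (0 : ℝ)) + w.2 • ((0 : ℝ), (1 : ℝ)) := by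
      apply Prod.ext <;> simp
    conv_lhs => rw [hw]
    rw [map_add, map_smul, map_smul, ← hAdef, ← hBcdef]
    simp only [smul_eq_mul]
    ring
  -- the linear equivalence
  set Tf : ℝ × ℝ →L[ℝ] ℝ × ℝ :=
    ((A • ContinuousLinearMap.fst ℝ ℝ ℝ) + (Bc • ContinuousLinearMap.snd ℝ ℝ ℝ)).prod
      (ContinuousLinearMap.snd ℝ ℝ ℝ) with hTfdef
  set Tg : ℝ × ℝ →L[ℝ] ℝ × ℝ :=
    ((A⁻¹ • ContinuousLinearMap.fst ℝ ℝ ℝ) - ((A⁻¹ * Bc) • ContinuousLinearMap.snd ℝ ℝ ℝ)).prod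
      (ContinuousLinearMap.snd ℝ ℝ ℝ) with hTgdef
  have hTfg : Function.LeftInverse Tg Tf := by
    intro x
    apply Prod.ext
    · simp [hTfdef, hTgdef, smul_eq_mul]
      try field_simp
      try ring
    · simp [hTfdef, hTgdef]
  have hTgf : Function.RightInverse Tg Tf := by
    intro x
    apply Prod.ext
    · simp [hTfdef, hTgdef, smul_eq_mul]
      try field_simp
      try ring
    · simp [hTfdef, hTgdef]
  set E := ContinuousLinearEquiv.equivOfInverse Tf Tg hTfg hTgf with hEdef
  set Φ : ℝ × ℝ → ℝ × ℝ := fun p => (𝓗 p, p.2) with hΦdef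
  have hΦprod : HasStrictFDerivAt Φ
      ((fderiv ℝ 𝓗 (e, ξ)).prod (ContinuousLinearMap.snd ℝ ℝ ℝ)) (e, ξ) :=
    HasStrictFDerivAt.prodMk (hsmooth.contDiffAt.hasStrictFDerivAt (by norm_num))
      ((ContinuousLinearMap.snd ℝ ℝ ℝ).hasStrictFDerivAt)
  have hEeq : (fderiv ℝ 𝓗 (e, ξ)).prod (ContinuousLinearMap.snd ℝ ℝ ℝ)
      = (E : ℝ × ℝ →L[ℝ] ℝ × ℝ) := by
    refine ContinuousLinearMap.ext fun w => ?_
    apply Prod.ext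
    · simp [hEdef, hTfdef, hlin w, smul_eq_mul]
    · simp [hEdef, hTfdef]
  have hΦE : HasStrictFDerivAt Φ (E : ℝ × ℝ →L[ℝ] ℝ × ℝ) (e, ξ) := by
    rw [← hEeq]; exact hΦprod
  have hΦa : Φ (e, ξ) = (h, ξ) := by rw [hΦdef]; simp only []; rw [hev]
  set Ψ := hΦE.localInverse Φ E (e, ξ) with hΨdef
  have hright : ∀ᶠ p : ℝ × ℝ in 𝓝 (h, ξ), Φ (Ψ p) = p := by
    have := hΦE.eventually_right_inverse
    rwa [hΦa] at this
  have hstr : HasStrictFDerivAt Ψ (E.symm : ℝ × ℝ →L[ℝ] ℝ × ℝ) (h, ξ) := by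
    have := hΦE.to_localInverse
    rwa [hΦa] at this
  have hΨcont : ContinuousAt Ψ (h, ξ) := hstr.continuousAt
  have hΨval : Ψ (h, ξ) = (e, ξ) := by
    have := hΦE.localInverse_apply_image
    rwa [hΦa] at this
  have hU : IsOpen {q : ℝ × ℝ | 0 < q.1 ∧ q.1 < r} :=
    (isOpen_lt continuous_const continuous_fst).inter (isOpen_lt continuous_fst continuous_const)
  have hevU : ∀ᶠ p : ℝ × ℝ in 𝓝 (h, ξ), Ψ p ∈ {q : ℝ × ℝ | 0 < q.1 ∧ q.1 < r} :=
    hΨcont.eventually_mem (hU.mem_nhds (by rw [hΨval]; exact ⟨hepos, helt⟩))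
  have hevM : ∀ᶠ p : ℝ × ℝ in 𝓝 (h, ξ),
      |p.2| ≤ r/10 ∧ -(ω₀/8)*p.2^2 ≤ p.1 ∧ p.1 ≤ ω₀*r^2/8 := by
    have hopen : IsOpen {p : ℝ × ℝ | |p.2| < r/10 ∧ -(ω₀/8)*p.2^2 < p.1 ∧ p.1 < ω₀*r^2/8} := by
      have ho1 : IsOpen {p : ℝ × ℝ | |p.2| < r/10} :=
        isOpen_lt (continuous_abs.comp continuous_snd) continuous_const
      have ho2 : IsOpen {p : ℝ × ℝ | -(ω₀/8)*p.2^2 < p.1} :=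
        isOpen_lt (continuous_const.mul (continuous_snd.pow 2)) continuous_fst
      have ho3 : IsOpen {p : ℝ × ℝ | p.1 < ω₀*r^2/8} :=
        isOpen_lt continuous_fst continuous_const
      exact ho1.inter (ho2.inter ho3)
    have hmem2 : -(ω₀/8)*ξ^2 < h := by
      rcases (sq_nonneg ξ).lt_or_eq with hz | hz
      · linarith [mul_pos hω₀ hz, hh0]
      · have hh' : 0 < h := by rw [← hz, add_zero] at hpos; exact hpos
        linarith [mul_nonneg hω₀.le (sq_nonneg ξ)]
    have hmem : ((h, ξ) : ℝ × ℝ) ∈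
        {p : ℝ × ℝ | |p.2| < r/10 ∧ -(ω₀/8)*p.2^2 < p.1 ∧ p.1 < ω₀*r^2/8} := by
      refine ⟨by simpa using lt_of_le_of_lt hξ (by linarith), by simpa using hmem2, ?_⟩
      simp only [Set.mem_setOf_eq]
      linarith [mul_pos hω₀ (mul_pos hr hr), hh4]
    filter_upwards [hopen.mem_nhds hmem] with p hp
    exact ⟨hp.1.le, hp.2.1.le, hp.2.2.le⟩
  have heq : (fun p : ℝ × ℝ => ηt p.1 p.2) =ᶠ[𝓝 (h, ξ)] fun p : ℝ × ℝ => (Ψ p).1 := by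
    filter_upwards [hright, hevU, hevM] with p h1 h2 h3
    simp only [hΦdef] at h1
    have h2nd : (Ψ p).2 = p.2 := (Prod.ext_iff.1 h1).2
    have h1st : 𝓗 (Ψ p) = p.1 := (Prod.ext_iff.1 h1).1
    have hsol : 𝓗 ((Ψ p).1, p.2) = p.1 := by rw [← h2nd, Prod.mk.eta]; exact h1st
    obtain ⟨ht0, htr, htv⟩ := hηtspec p.1 p.2 h3
    exact huniq p.2 p.1 (ηt p.1 p.2) ((Ψ p).1) h3.1 h3.2.1 ht0 htr htv h2.1.le h2.2.le hsol
  have hfd : HasFDerivAt (fun p : ℝ × ℝ => (Ψ p).1)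
      ((ContinuousLinearMap.fst ℝ ℝ ℝ).comp
        (E.symm : ℝ × ℝ →L[ℝ] ℝ × ℝ)) (h, ξ) :=
    (ContinuousLinearMap.fst ℝ ℝ ℝ).hasFDerivAt.comp (h, ξ) hstr.hasFDerivAt
  have hfd' : HasFDerivAt (fun p : ℝ × ℝ => ηt p.1 p.2)
      ((ContinuousLinearMap.fst ℝ ℝ ℝ).comp
        (E.symm : ℝ × ℝ →L[ℝ] ℝ × ℝ)) (h, ξ) :=
    hfd.congr_of_eventuallyEq heq
  have hsymmE : ∀ y : ℝ × ℝ, E.symm y = Tg y := by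
    intro y
    rw [hEdef, ContinuousLinearEquiv.symm_equivOfInverse]
    rfl
  refine ⟨hfd'.differentiableAt, ?_, ?_⟩
  · rw [hfd'.fderiv]
    have : (ContinuousLinearMap.fst ℝ ℝ ℝ).comp
        (E.symm : ℝ × ℝ →L[ℝ] ℝ × ℝ) ((1 : ℝ), (0 : ℝ))
        = (Tg ((1 : ℝ), (0 : ℝ))).1 := by
      simp [hsymmE]
    rw [this, hTgdef]
    simp [smul_eq_mul]
    try field_simp
    try ring
  · rw [hfd'.fderiv]
    have : (ContinuousLinearMap.fst ℝ ℝ ℝ).comp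
        (E.symm : ℝ × ℝ →L[ℝ] ℝ × ℝ) ((0 : ℝ), (1 : ℝ))
        = (Tg ((0 : ℝ), (1 : ℝ))).1 := by
      simp [hsymmE]
    rw [this, hTgdef]
    simp [smul_eq_mul]
    try field_simp
    try ring
end

section
/- Let c > 0, ε > 0, n ∈ ℕ, and let h₁ > h₂ > ⋯ > h_{n+1} > 0 be real numbers satisfying h_s − h_{s+1} ≥ c ε for all s = 1, …, n, and additionally h₁ ≤ e^{−2}. Then ε ∑_{s=1}^{n} 1/(h_s (ln h_s)²) ≤ 1/(2c). -/
open Real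


lemma mono_aux {x y : ℝ} (hx : 0 < x) (hxy : x ≤ y) (hy : y ≤ Real.exp (-2)) :
    x * Real.log x ^ 2 ≤ y * Real.log y ^ 2 := by
  have hy0 : 0 < y := lt_of_lt_of_le hx hxy
  have hLy : Real.log y ≤ -2 := by
    have := Real.log_le_log hy0 hy
    rwa [Real.log_exp] at this
  set v := Real.log y - Real.log x with hv
  have hv0 : 0 ≤ v := sub_nonneg.2 (Real.log_le_log hx hxy)
  have hxe : x = y * Real.exp (-v) := by
    rw [hv, neg_sub, Real.exp_sub, ← Real.exp_log hx, ← Real.exp_log hy0]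
    field_simp
    simp only [Real.log_exp]; ring
  have hlx : Real.log x = Real.log y - v := by rw [hv]; ring
  set L := -Real.log y with hL
  have hL2 : 2 ≤ L := by rw [hL]; linarith
  have h1 : v / 2 + 1 ≤ Real.exp (v / 2) := Real.add_one_le_exp _
  have h2 : Real.exp (v/2) * Real.exp (v/2) = Real.exp v := by
    rw [← Real.exp_add]; ring_nf
  have h3 : Real.exp (-v) * Real.exp v = 1 := by
    rw [← Real.exp_add]; simp
  have hev : (1 + v/2)^2 ≤ Real.exp v := by nlinarith [Real.exp_pos (v/2)]
  have hA : L^2 * (1 + v/2)^2 ≤ L^2 * Real.exp v :=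
    mul_le_mul_of_nonneg_left hev (by positivity)
  have hB' : L + v ≤ L + L*v/2 := by
    nlinarith [mul_nonneg hv0 (show (0:ℝ) ≤ L - 2 by linarith)]
  have hB : (L + v)^2 ≤ (L + L*v/2)^2 :=
    pow_le_pow_left₀ (by linarith) hB' 2
  have key : (L + v)^2 ≤ L^2 * Real.exp v := by
    calc (L + v)^2 ≤ (L + L*v/2)^2 := hB
    _ = L^2 * (1 + v/2)^2 := by ring
    _ ≤ L^2 * Real.exp v := hA
  have hlyL : Real.log y = -L := by rw [hL]; ring
  rw [hlx, hlyL]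
  rw [hxe]
  have hevpos := Real.exp_pos (-v)
  have hmul := mul_le_mul_of_nonneg_left key (le_of_lt (mul_pos hy0 hevpos))
  have e : y * Real.exp (-v) * (L ^ 2 * Real.exp v) = y * L ^ 2 := by
    calc y * Real.exp (-v) * (L ^ 2 * Real.exp v)
        = y * L ^ 2 * (Real.exp (-v) * Real.exp v) := by ring
    _ = y * L ^ 2 := by rw [h3]; ring
  have e2 : (-L - v)^2 = (L + v)^2 := by ring
  rw [e2]
  nlinarith [hmul, e]

lemma step_aux {b a : ℝ} (hb : 0 < b) (hba : b < a) (ha : a ≤ Real.exp (-2)) :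
    (a - b) * (1 / (a * Real.log a ^ 2)) ≤ (-(Real.log a)⁻¹) - (-(Real.log b)⁻¹) := by
  have ha0 : 0 < a := hb.trans hba
  have hloga : Real.log a ≤ -2 := by
    have := Real.log_le_log ha0 ha
    rwa [Real.log_exp] at this
  -- every x in [b,a] is positive and has log x ≤ -2
  have hx : ∀ x ∈ Set.Icc b a, 0 < x ∧ Real.log x ≤ -2 := by
    intro x hx
    refine ⟨lt_of_lt_of_le hb hx.1, ?_⟩
    have := Real.log_le_log (lt_of_lt_of_le hb hx.1) (hx.2.trans ha)
    rwa [Real.log_exp] at this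
  set f : ℝ → ℝ := fun x => 1 / (x * Real.log x ^ 2) with hf
  set F : ℝ → ℝ := fun x => -(Real.log x)⁻¹ with hF
  have hderiv : ∀ x ∈ Set.Icc b a, HasDerivAt F (f x) x := by
    intro x hxi
    obtain ⟨hx0, hlx⟩ := hx x hxi
    have hlne : Real.log x ≠ 0 := by linarith
    have d1 : HasDerivAt Real.log x⁻¹ x := Real.hasDerivAt_log (ne_of_gt hx0)
    have d2 := (d1.inv hlne).neg
    convert d2 using 1
    show 1 / (x * Real.log x ^ 2) = _
    ring
    all_goals rfl
  have hcont : ContinuousOn f (Set.uIcc b a) := by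
    rw [Set.uIcc_of_le hba.le]
    apply ContinuousOn.div continuousOn_const
    · exact continuousOn_id.mul
        (((Real.continuousOn_log).mono (fun x hxi => by
          simp only [Set.mem_compl_iff, Set.mem_singleton_iff]
          exact ne_of_gt (hx x hxi).1)).pow 2)
    · intro x hxi
      obtain ⟨hx0, hlx⟩ := hx x hxi
      have : Real.log x ≠ 0 := by linarith
      positivity
  have hint : IntervalIntegrable f MeasureTheory.volume b a :=
    hcont.intervalIntegrable
  have hFTC : ∫ x in b..a, f x = F a - F b :=
    intervalIntegral.integral_eq_sub_of_hasDerivAt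
      (fun x hxi => hderiv x (by rwa [Set.uIcc_of_le hba.le] at hxi)) hint
  have hconst : ∫ _x in b..a, f a = (a - b) * f a := by
    rw [intervalIntegral.integral_const]; simp [smul_eq_mul]
  have hmono : ∫ x in b..a, f a ≤ ∫ x in b..a, f x := by
    apply intervalIntegral.integral_mono_on hba.le intervalIntegrable_const hint
    intro x hxi
    obtain ⟨hx0, hlx⟩ := hx x hxi
    have hxll : x * Real.log x ^ 2 ≤ a * Real.log a ^ 2 :=
      mono_aux hx0 hxi.2 ha
    have hpos : 0 < x * Real.log x ^ 2 := by
      have : Real.log x ≠ 0 := by linarith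
      positivity
    exact one_div_le_one_div_of_le hpos hxll
  calc (a - b) * (1 / (a * Real.log a ^ 2)) = ∫ _x in b..a, f a := by rw [hconst]
  _ ≤ ∫ x in b..a, f x := hmono
  _ = F a - F b := hFTC



/-- Summation estimate from Subsection 3.3, part II: for energies `h₁ > ⋯ > h_{n+1} > 0`
with `h₁ ≤ e^{−2}` decreasing by at least `cε` per step,
`ε ∑_{s=1}^{n} 1/(h_s ln² h_s) ≤ 1/(2c)`. -/
theorem energy_sum_log_squared_estimate (c ε : ℝ) (hc : 0 < c) (hε : 0 < ε) (n : ℕ)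
    (h : ℕ → ℝ)
    (hpos : ∀ s : ℕ, 1 ≤ s → s ≤ n + 1 → 0 < h s)
    (hdec : ∀ s : ℕ, 1 ≤ s → s ≤ n → h (s + 1) < h s)
    (hgap : ∀ s : ℕ, 1 ≤ s → s ≤ n → h s - h (s + 1) ≥ c * ε)
    (hsmall : h 1 ≤ Real.exp (-2)) :
    ε * ∑ s ∈ Finset.Icc 1 n, 1 / (h s * (Real.log (h s)) ^ 2) ≤ 1 / (2 * c) := by
  set F : ℝ → ℝ := fun x => -(Real.log x)⁻¹ with hF
  -- monotonicity: h s ≤ h 1 for 1 ≤ s ≤ n+1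
  have hmono : ∀ s : ℕ, 1 ≤ s → s ≤ n + 1 → h s ≤ h 1 := by
    intro s hs1 hsn
    induction s with
    | zero => omega
    | succ t ih =>
      rcases Nat.eq_or_lt_of_le hs1 with h1 | h1
      · simp [← h1]
      · have ht1 : 1 ≤ t := by omega
        have htn : t ≤ n := by omega
        exact le_trans (hdec t ht1 htn).le (ih ht1 (by omega))
  -- per-term estimate
  have hterm : ∀ s ∈ Finset.Icc 1 n,
      ε * (1 / (h s * (Real.log (h s)) ^ 2)) ≤ (1 / c) * (F (h s) - F (h (s + 1))) := by
    intro s hs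
    rw [Finset.mem_Icc] at hs
    obtain ⟨hs1, hsn⟩ := hs
    have hhs := hpos s hs1 (by omega)
    have hhs1 := hpos (s + 1) (by omega) (by omega)
    have hba : h (s + 1) < h s := hdec s hs1 hsn
    have hsm : h s ≤ Real.exp (-2) := le_trans (hmono s hs1 (by omega)) hsmall
    have hstep := step_aux hhs1 hba hsm
    have hfpos : 0 < 1 / (h s * (Real.log (h s)) ^ 2) := by
      have hlog : Real.log (h s) ≤ -2 := by
        have := Real.log_le_log hhs hsm
        rwa [Real.log_exp] at this
      have : Real.log (h s) ≠ 0 := by linarith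
      positivity
    have hgaps := hgap s hs1 hsn
    have h1 : ε * (1 / (h s * (Real.log (h s)) ^ 2))
        ≤ (1 / c) * ((h s - h (s + 1)) * (1 / (h s * (Real.log (h s)) ^ 2))) := by
      rw [← mul_assoc]
      apply mul_le_mul_of_nonneg_right _ hfpos.le
      rw [one_div, ← ge_iff_le, ge_iff_le, le_inv_mul_iff₀ hc]
      linarith
    exact h1.trans (mul_le_mul_of_nonneg_left hstep (by positivity))
  -- sum it up
  rw [Finset.mul_sum]
  have hsum : ∑ s ∈ Finset.Icc 1 n, ε * (1 / (h s * (Real.log (h s)) ^ 2))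
      ≤ ∑ s ∈ Finset.Icc 1 n, (1 / c) * (F (h s) - F (h (s + 1))) :=
    Finset.sum_le_sum hterm
  have htel : ∀ m : ℕ, ∑ s ∈ Finset.Icc 1 m, (F (h s) - F (h (s + 1)))
      = F (h 1) - F (h (m + 1)) := by
    intro m
    induction m with
    | zero => simp
    | succ k ih =>
      rw [Finset.sum_Icc_succ_top (by omega), ih]
      ring
  have hF1 : F (h 1) ≤ 1 / 2 := by
    have hlog : Real.log (h 1) ≤ -2 := by
      have := Real.log_le_log (hpos 1 le_rfl (by omega)) hsmall
      rwa [Real.log_exp] at this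
    simp only [hF]
    have hne : Real.log (h 1) ≠ 0 := by linarith
    have hinv := mul_inv_cancel₀ hne
    have hneg : (Real.log (h 1))⁻¹ < 0 := inv_lt_zero.2 (by linarith)
    nlinarith
  have hFn : 0 ≤ F (h (n + 1)) := by
    have hp := hpos (n + 1) (by omega) le_rfl
    have hsm : h (n + 1) ≤ Real.exp (-2) := le_trans (hmono (n+1) (by omega) le_rfl) hsmall
    have hlog : Real.log (h (n + 1)) ≤ -2 := by
      have := Real.log_le_log hp hsm
      rwa [Real.log_exp] at this
    simp only [hF]
    have : (Real.log (h (n + 1)))⁻¹ ≤ 0 := inv_nonpos.2 (by linarith)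
    linarith
  calc ∑ s ∈ Finset.Icc 1 n, ε * (1 / (h s * (Real.log (h s)) ^ 2))
      ≤ ∑ s ∈ Finset.Icc 1 n, (1 / c) * (F (h s) - F (h (s + 1))) := hsum
  _ = (1 / c) * (F (h 1) - F (h (n + 1))) := by rw [← Finset.mul_sum, htel n]
  _ ≤ (1 / c) * (1 / 2) := by
      apply mul_le_mul_of_nonneg_left _ (by positivity)
      simp only [hF] at hF1 hFn ⊢
      linarith
  _ = 1 / (2 * c) := by field_simp
end

section
/- Let 0 < h₀ < 1 and let α > 0, β ∈ ℝ, M > 0, c > 0. Suppose χ, μ : (0, h₀] → ℝ are differentiable with |χ(h)| ≤ M, |μ(h)| ≤ M, |χ'(h)| ≤ M |ln h| and |μ'(h)| ≤ M |ln h| for all h ∈ (0, h₀]. Define T(h) = α |ln h| + χ(h) and R(h) = β |ln h| + μ(h), and assume T(h) ≥ c |ln h| for all h ∈ (0, h₀]. Then there exist constants C > 0 and h₁ ∈ (0, h₀] such that for all h ∈ (0, h₁], the function R/T is differentiable at h and |(R/T)'(h)| ≤ C / (h (ln h)²). -/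
/-- Analytic core of Lemma 3.4: if `T(h) = α|ln h| + χ(h)` and `R(h) = β|ln h| + μ(h)` with
`χ, μ = O(1)`, `χ', μ' = O(ln h)`, and `T(h) ≥ c|ln h|`, then `(R/T)'(h) = O(h⁻¹ ln⁻² h)`. -/
theorem time_average_derivative_estimate (h₀ α β M c : ℝ)
    (hh₀ : 0 < h₀) (hh₀1 : h₀ < 1) (hα : 0 < α) (hM : 0 < M) (hc : 0 < c)
    (χ μ χ' μ' : ℝ → ℝ)
    (hχdiff : ∀ h ∈ Set.Ioc (0 : ℝ) h₀, HasDerivAt χ (χ' h) h)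
    (hμdiff : ∀ h ∈ Set.Ioc (0 : ℝ) h₀, HasDerivAt μ (μ' h) h)
    (hχb : ∀ h ∈ Set.Ioc (0 : ℝ) h₀, |χ h| ≤ M)
    (hμb : ∀ h ∈ Set.Ioc (0 : ℝ) h₀, |μ h| ≤ M)
    (hχ'b : ∀ h ∈ Set.Ioc (0 : ℝ) h₀, |χ' h| ≤ M * |Real.log h|)
    (hμ'b : ∀ h ∈ Set.Ioc (0 : ℝ) h₀, |μ' h| ≤ M * |Real.log h|)
    (hT : ∀ h ∈ Set.Ioc (0 : ℝ) h₀, α * |Real.log h| + χ h ≥ c * |Real.log h|) :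
    ∃ C : ℝ, 0 < C ∧ ∃ h₁ : ℝ, 0 < h₁ ∧ h₁ ≤ h₀ ∧
      ∀ h ∈ Set.Ioc (0 : ℝ) h₁,
        DifferentiableAt ℝ
          (fun t : ℝ => (β * |Real.log t| + μ t) / (α * |Real.log t| + χ t)) h ∧
        |deriv (fun t : ℝ => (β * |Real.log t| + μ t) / (α * |Real.log t| + χ t)) h| ≤
          C / (h * (Real.log h) ^ 2) := by
  refine ⟨(5 * (α + |β|) * M + 8 * M ^ 2) / c ^ 2, by positivity,
    min h₀ (Real.exp (-1)), by positivity, min_le_left _ _, ?_⟩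
  intro h hh
  obtain ⟨h0, hle⟩ := hh
  have hle₀ : h ≤ h₀ := hle.trans (min_le_left _ _)
  have hmem : h ∈ Set.Ioc (0 : ℝ) h₀ := ⟨h0, hle₀⟩
  have hlee : h ≤ Real.exp (-1) := hle.trans (min_le_right _ _)
  have h1 : h < 1 := lt_of_le_of_lt hlee (by
    have := Real.exp_lt_one_iff.mpr (by norm_num : (-1:ℝ) < 0); linarith)
  have hlogneg : Real.log h < 0 := Real.log_neg h0 h1
  set L : ℝ := -Real.log h with hLdef
  have hL1 : 1 ≤ L := by
    have : Real.log h ≤ -1 := by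
      calc Real.log h ≤ Real.log (Real.exp (-1)) := Real.log_le_log h0 hlee
        _ = -1 := Real.log_exp _
    linarith
  have hL0 : 0 < L := by linarith
  have habsL : |Real.log h| = L := abs_of_neg hlogneg
  -- L² ≤ 4 / h
  have hsq : 0 < Real.sqrt h := Real.sqrt_pos.mpr h0
  have hLsqrt : L ≤ 2 / Real.sqrt h := by
    have h2 : Real.log (1 / Real.sqrt h) ≤ 1 / Real.sqrt h - 1 :=
      Real.log_le_sub_one_of_pos (by positivity)
    have h3 : Real.log (1 / Real.sqrt h) = -(Real.log h / 2) := by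
      rw [one_div, Real.log_inv, Real.log_sqrt h0.le]
    rw [h3] at h2
    have hinv : (1 / Real.sqrt h) * Real.sqrt h = 1 := by field_simp
    rw [le_div_iff₀ hsq]
    nlinarith [mul_le_mul_of_nonneg_right h2 hsq.le, hsq]
  have hL2 : L ^ 2 ≤ 4 / h := by
    have hs : Real.sqrt h ^ 2 = h := Real.sq_sqrt h0.le
    have : L ^ 2 ≤ (2 / Real.sqrt h) ^ 2 := by
      apply pow_le_pow_left₀ hL0.le hLsqrt
    calc L ^ 2 ≤ (2 / Real.sqrt h) ^ 2 := this
      _ = 4 / h := by rw [div_pow, hs]; norm_num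
  -- derivatives
  have hlog : HasDerivAt Real.log h⁻¹ h := Real.hasDerivAt_log (ne_of_gt h0)
  have hev : (fun t : ℝ => |Real.log t|) =ᶠ[nhds h] fun t => -Real.log t := by
    filter_upwards [Ioo_mem_nhds h0 h1] with t ht
    exact abs_of_neg (Real.log_neg ht.1 ht.2)
  have habsderiv : HasDerivAt (fun t : ℝ => |Real.log t|) (-h⁻¹) h :=
    HasDerivAt.congr_of_eventuallyEq hlog.neg hev
  have hTd : HasDerivAt (fun t : ℝ => α * |Real.log t| + χ t)
      (α * (-h⁻¹) + χ' h) h := ((habsderiv.const_mul α).add (hχdiff h hmem))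
  have hRd : HasDerivAt (fun t : ℝ => β * |Real.log t| + μ t)
      (β * (-h⁻¹) + μ' h) h := ((habsderiv.const_mul β).add (hμdiff h hmem))
  have hTlb : α * |Real.log h| + χ h ≥ c * L := by rw [← habsL]; exact hT h hmem
  have hTpos : 0 < α * |Real.log h| + χ h := lt_of_lt_of_le (by positivity) hTlb
  have hdiv := hRd.div hTd (ne_of_gt hTpos)
  refine ⟨hdiv.differentiableAt, ?_⟩
  rw [show deriv (fun t : ℝ => (β * |Real.log t| + μ t) / (α * |Real.log t| + χ t)) h = _ from hdiv.deriv]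
  -- abbreviations
  set x := χ h; set y := μ h; set x' := χ' h; set y' := μ' h
  have hxb : |x| ≤ M := hχb h hmem
  have hyb : |y| ≤ M := hμb h hmem
  have hx'b : |x'| ≤ M * L := by rw [← habsL]; exact hχ'b h hmem
  have hy'b : |y'| ≤ M * L := by rw [← habsL]; exact hμ'b h hmem
  rw [habsL] at *
  -- numerator identity
  have hnum : (β * (-h⁻¹) + y') * (α * L + x) - (β * L + y) * (α * (-h⁻¹) + x')
      = (α * y - β * x) / h + α * L * y' + x * y' - β * L * x' - y * x' := by
    field_simp; ring
  have hLL : L ≤ L ^ 2 := by nlinarith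
  have hnumb : |(β * (-h⁻¹) + y') * (α * L + x) - (β * L + y) * (α * (-h⁻¹) + x')|
      ≤ (5 * (α + |β|) * M + 8 * M ^ 2) / h := by
    rw [hnum]
    have eA : |α * y - β * x| ≤ (α + |β|) * M := by
      calc |α * y - β * x| ≤ |α * y| + |β * x| := abs_sub _ _
        _ = α * |y| + |β| * |x| := by rw [abs_mul, abs_mul, abs_of_pos hα]
        _ ≤ α * M + |β| * M := by gcongr
        _ = (α + |β|) * M := by ring
    have e1 : |(α * y - β * x) / h| ≤ (α + |β|) * M / h := by
      rw [abs_div, abs_of_pos h0]; gcongr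
    have e2 : |α * L * y'| ≤ α * M * (4 / h) := by
      rw [abs_mul, abs_mul, abs_of_pos hα, abs_of_pos hL0]
      calc α * L * |y'| ≤ α * L * (M * L) := by gcongr
        _ = α * M * L ^ 2 := by ring
        _ ≤ α * M * (4 / h) := by gcongr
    have e3 : |x * y'| ≤ M ^ 2 * (4 / h) := by
      rw [abs_mul]
      calc |x| * |y'| ≤ M * (M * L) := by gcongr
        _ = M ^ 2 * L := by ring
        _ ≤ M ^ 2 * L ^ 2 := by gcongr
        _ ≤ M ^ 2 * (4 / h) := by gcongr
    have e4 : |β * L * x'| ≤ |β| * M * (4 / h) := by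
      rw [abs_mul, abs_mul, abs_of_pos hL0]
      calc |β| * L * |x'| ≤ |β| * L * (M * L) := by gcongr
        _ = |β| * M * L ^ 2 := by ring
        _ ≤ |β| * M * (4 / h) := by gcongr
    have e5 : |y * x'| ≤ M ^ 2 * (4 / h) := by
      rw [abs_mul]
      calc |y| * |x'| ≤ M * (M * L) := by gcongr
        _ = M ^ 2 * L := by ring
        _ ≤ M ^ 2 * L ^ 2 := by gcongr
        _ ≤ M ^ 2 * (4 / h) := by gcongr
    have tri : |(α * y - β * x) / h + α * L * y' + x * y' - β * L * x' - y * x'|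
        ≤ |(α * y - β * x) / h| + |α * L * y'| + |x * y'| + |β * L * x'| + |y * x'| := by
      calc |(α * y - β * x) / h + α * L * y' + x * y' - β * L * x' - y * x'|
          ≤ |(α * y - β * x) / h + α * L * y' + x * y' - β * L * x'| + |y * x'| :=
            abs_sub _ _
        _ ≤ |(α * y - β * x) / h + α * L * y' + x * y'| + |β * L * x'| + |y * x'| := by
            gcongr ?_ + _; exact abs_sub _ _
        _ ≤ |(α * y - β * x) / h + α * L * y'| + |x * y'| + |β * L * x'| + |y * x'| := by
            gcongr ?_ + _ + _; exact abs_add_le _ _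
        _ ≤ |(α * y - β * x) / h| + |α * L * y'| + |x * y'| + |β * L * x'| + |y * x'| := by
            gcongr ?_ + _ + _ + _; exact abs_add_le _ _
    have hsum : (α + |β|) * M / h + α * M * (4 / h) + M ^ 2 * (4 / h) + |β| * M * (4 / h)
        + M ^ 2 * (4 / h) = (5 * (α + |β|) * M + 8 * M ^ 2) / h := by
      field_simp; ring
    linarith [tri, e1, e2, e3, e4, e5]
  -- final bound
  have hden : c ^ 2 * L ^ 2 ≤ (α * L + x) ^ 2 := by
    have h1 : (c * L) ^ 2 ≤ (α * L + x) ^ 2 := by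
      apply pow_le_pow_left₀ (by positivity) hTlb
    calc c ^ 2 * L ^ 2 = (c * L) ^ 2 := by ring
      _ ≤ (α * L + x) ^ 2 := h1
  have hfinal : |((β * (-h⁻¹) + y') * (α * L + x) - (β * L + y) * (α * (-h⁻¹) + x'))
      / (α * L + x) ^ 2| ≤ (5 * (α + |β|) * M + 8 * M ^ 2) / c ^ 2 / (h * Real.log h ^ 2) := by
    rw [abs_div, abs_of_pos (by positivity : (0:ℝ) < (α * L + x) ^ 2)]
    have hLlog : Real.log h ^ 2 = L ^ 2 := by rw [hLdef]; ring
    rw [hLlog]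
    calc |(β * (-h⁻¹) + y') * (α * L + x) - (β * L + y) * (α * (-h⁻¹) + x')| / (α * L + x) ^ 2
        ≤ ((5 * (α + |β|) * M + 8 * M ^ 2) / h) / (c ^ 2 * L ^ 2) :=
          div_le_div₀ (by positivity) hnumb (by positivity) hden
      _ = (5 * (α + |β|) * M + 8 * M ^ 2) / c ^ 2 / (h * L ^ 2) := by
          rw [div_div, div_div]; ring_nf
  exact hfinal
end
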